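/- Let A be a synaptic algebra whose projection lattice P is a complete lattice. Let (e_i)_{i∈I} and (f_i)_{i∈I} be pairwise orthogonal families in P with e = ⋁_{i∈I} e_i and f = ⋁_{i∈I} f_i. If e and f are orthogonal and if, for each i ∈ I, e_i and f_i are exchanged by a symmetry s_i ∈ A, then there is a symmetry s ∈ A exchanging e and f. -/
import Mathlib


/-- For subsets `A, B` of a ring `R`, the commutant of `B` within `A`:
`C(B) = {x ∈ A : x b = b x for all b ∈ B}`. -/
def SynComm {R : Type*} [Ring R] (A : Set R) (B : Set R) : Set R :=
  {x | x ∈ A ∧ ∀ b ∈ B, x * b = b * x}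

/-- A synaptic algebra: a real vector subspace `A` of a real linear associative
algebra `R` with unity, satisfying axioms SA1–SA8 of Foulis.  The partial order
is recorded as a relation `le` on `R`, whose axioms are imposed on elements of
`A`; `1` is an order unit, the order is archimedean, and the norm convergence
occurring in SA8 is expressed via the order-unit characterization
`‖a‖ ≤ ε ↔ -ε•1 ≤ a ≤ ε•1`. -/
structure SynapticAlgebra (R : Type*) [Ring R] [Algebra ℝ R] where
  A : Set R
  zero_mem : (0 : R) ∈ A
  one_mem : (1 : R) ∈ A
  add_mem : ∀ {a b : R}, a ∈ A → b ∈ A → a + b ∈ A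
  smul_mem : ∀ (r : ℝ) {a : R}, a ∈ A → r • a ∈ A
  /-- the partial order on `A` (SA1) -/
  le : R → R → Prop
  le_refl : ∀ a ∈ A, le a a
  le_trans : ∀ a ∈ A, ∀ b ∈ A, ∀ c ∈ A, le a b → le b c → le a c
  le_antisymm : ∀ a ∈ A, ∀ b ∈ A, le a b → le b a → a = b
  add_le_add : ∀ a ∈ A, ∀ b ∈ A, ∀ c ∈ A, le a b → le (a + c) (b + c)
  smul_nonneg : ∀ (r : ℝ), 0 ≤ r → ∀ a ∈ A, le 0 a → le 0 (r • a)
  /-- SA1: the ordered vector space `A` is archimedean -/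
  archimedean : ∀ a ∈ A, ∀ b ∈ A, (∀ n : ℕ, le (n • a) b) → le a 0
  /-- SA1: `1` is an order unit for `A` -/
  orderUnit : ∀ a ∈ A, ∃ r : ℝ, le a (r • (1 : R))
  /-- SA2 (together with closure of `A` under squaring) -/
  sq_mem : ∀ a ∈ A, a * a ∈ A
  sq_nonneg : ∀ a ∈ A, le 0 (a * a)
  /-- SA3 -/
  SA3 : ∀ a ∈ A, ∀ b ∈ A, le 0 a → le 0 b → le 0 (a * b * a)
  /-- SA4 -/
  SA4 : ∀ a ∈ A, ∀ b ∈ A, le 0 b → a * b * a = 0 → a * b = 0 ∧ b * a = 0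
  /-- SA5: positive elements have square roots in `CC(a)` -/
  SA5 : ∀ a ∈ A, le 0 a →
    ∃ b ∈ SynComm A (SynComm A {a}), le 0 b ∧ b * b = a
  /-- SA6: existence of carrier projections -/
  SA6 : ∀ a ∈ A, ∃ p ∈ A, p * p = p ∧ ∀ b ∈ A, (a * b = 0 ↔ p * b = 0)
  /-- SA7: elements above `1` are invertible -/
  SA7 : ∀ a ∈ A, le 1 a → ∃ b ∈ A, a * b = 1 ∧ b * a = 1
  /-- SA8: commutants are closed under norm limits of ascending commuting sequences -/
  SA8 : ∀ a ∈ A, ∀ b ∈ A, ∀ f : ℕ → R, (∀ n, f n ∈ A) →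
    (∀ n, f n * b = b * f n) → (∀ n m, f n * f m = f m * f n) →
    (∀ n, le (f n) (f (n + 1))) →
    (∀ ε : ℝ, 0 < ε → ∃ N : ℕ, ∀ n ≥ N,
        le (a - f n) (ε • (1 : R)) ∧ le ((-ε) • (1 : R)) (a - f n)) →
    a * b = b * a
  /-- non-degeneracy: `0 ≠ 1` -/
  nondegenerate : (0 : R) ≠ 1

namespace SynapticAlgebra

variable {R : Type*} [Ring R] [Algebra ℝ R] (S : SynapticAlgebra R)

/-- The set `P` of projections of the synaptic algebra. -/
def Proj : Set R := {p | p ∈ S.A ∧ p * p = p}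

/-- A symmetry: an element `s ∈ A` with `s² = 1`. -/
def IsSymmetry (s : R) : Prop := s ∈ S.A ∧ s * s = 1

/-- Projections `e` and `f` are exchanged by a symmetry. -/
def ExchBySym (e f : R) : Prop := ∃ s, S.IsSymmetry s ∧ s * e * s = f

/-- `p ∼ q`: equivalence of projections induced by finite sequences of
symmetries, i.e. `q = sₙ ⋯ s₁ p s₁ ⋯ sₙ`. -/
def Equiv (p q : R) : Prop := Relation.ReflTransGen S.ExchBySym p q

/-- `p` and `q` are related: they have nonzero equivalent subprojections. -/
def Related (p q : R) : Prop :=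
  ∃ p₁ ∈ S.Proj, ∃ q₁ ∈ S.Proj, p₁ ≠ 0 ∧ q₁ ≠ 0 ∧
    S.le p₁ p ∧ S.le q₁ q ∧ S.Equiv p₁ q₁

/-- `p ≼ q`: `p` is equivalent to a subprojection of `q`. -/
def SubEquiv (p q : R) : Prop := ∃ q₁ ∈ S.Proj, S.le q₁ q ∧ S.Equiv p q₁

/-- `c` commutes with every element of `A` (so a projection `c` with this
property is a central projection, `c ∈ P ∩ C(A)`). -/
def IsCentral (c : R) : Prop := ∀ a ∈ S.A, c * a = a * c

/-- `m = e ∧ f`, the infimum of `e` and `f` in the projection lattice `P`. -/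
def IsMeet (e f m : R) : Prop :=
  m ∈ S.Proj ∧ S.le m e ∧ S.le m f ∧
    ∀ r ∈ S.Proj, S.le r e → S.le r f → S.le r m

/-- `j = e ∨ f`, the supremum of `e` and `f` in the projection lattice `P`. -/
def IsJoin (e f j : R) : Prop :=
  j ∈ S.Proj ∧ S.le e j ∧ S.le f j ∧
    ∀ r ∈ S.Proj, S.le e r → S.le f r → S.le j r

/-- `m = ⋁ Q`, the supremum of the set `Q` in the projection lattice `P`. -/
def IsSupOf (Q : Set R) (m : R) : Prop :=
  m ∈ S.Proj ∧ (∀ q ∈ Q, S.le q m) ∧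
    ∀ b ∈ S.Proj, (∀ q ∈ Q, S.le q b) → S.le m b

/-- `m = ⋀ Q`, the infimum of the set `Q` in the projection lattice `P`. -/
def IsInfOf (Q : Set R) (m : R) : Prop :=
  m ∈ S.Proj ∧ (∀ q ∈ Q, S.le m q) ∧
    ∀ b ∈ S.Proj, (∀ q ∈ Q, S.le b q) → S.le b m

/-- The projection lattice `P` is a complete lattice: every subset of `P`
has a supremum and an infimum in `P`. -/
def ProjComplete : Prop :=
  ∀ Q ⊆ S.Proj, (∃ m, S.IsSupOf Q m) ∧ (∃ m, S.IsInfOf Q m)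

/-- The projection lattice `P` is centrally orthocomplete: every family of
projections dominated by a pairwise orthogonal family of central projections
has a supremum in `P`. -/
def CentrallyOrthocomplete : Prop :=
  ∀ Q ⊆ S.Proj, ∀ c : R → R,
    (∀ q ∈ Q, c q ∈ S.Proj ∧ S.IsCentral (c q) ∧ S.le q (c q)) →
    (∀ q ∈ Q, ∀ q' ∈ Q, q ≠ q' → c q * c q' = 0) →
    ∃ m, S.IsSupOf Q m

/-- `c = γ p`: `c` is the central cover of `p`, the smallest central
projection dominating `p`. -/
def IsCentralCover (p c : R) : Prop :=
  c ∈ S.Proj ∧ S.IsCentral c ∧ S.le p c ∧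
    ∀ d ∈ S.Proj, S.IsCentral d → S.le p d → S.le c d

/-- `x = φ_e(f) = e ∧ (e^⊥ ∨ f)`, the Sasaki projection of `f` determined
by `e`, in the projection lattice `P` (where `e^⊥ = 1 - e`). -/
def IsSasaki (e f x : R) : Prop :=
  ∃ j, S.IsJoin (1 - e) f j ∧ S.IsMeet e j x

/-- Mackey compatibility of projections `p` and `q` in the OML `P`:
there are pairwise orthogonal projections `p₁, q₁, d` with `p = p₁ ∨ d = p₁ + d`
and `q = q₁ ∨ d = q₁ + d` (orthogonal projections satisfy `pq = qp = 0` and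
their join is their sum). -/
def Compatible (p q : R) : Prop :=
  ∃ p₁ ∈ S.Proj, ∃ q₁ ∈ S.Proj, ∃ d ∈ S.Proj,
    p₁ * q₁ = 0 ∧ q₁ * p₁ = 0 ∧ p₁ * d = 0 ∧ d * p₁ = 0 ∧
    q₁ * d = 0 ∧ d * q₁ = 0 ∧ p = p₁ + d ∧ q = q₁ + d

end SynapticAlgebra

set_option linter.unusedSectionVars false

section RingLemmas
variable {R : Type*} [Ring R]

theorem syn_hse {s e f : R} (hs : s*s = 1) (hx : s*e*s = f) : s*e = f*s := by
  rw [← hx, mul_assoc (s*e) s s, hs, mul_one]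

theorem syn_hes {s e f : R} (hs : s*s = 1) (hx : s*e*s = f) : e*s = s*f := by
  rw [← hx, show s*(s*e*s) = (s*s)*(e*s) from by noncomm_ring, hs, one_mul]

variable (s e f : R)

theorem syn_expandL (x : R) :
    (e + f - (s*e + e*s)) * x = e*x + f*x - (s*(e*x) + e*(s*x)) := by noncomm_ring

theorem syn_expandR (x : R) :
    x * (e + f - (s*e + e*s)) = x*e + x*f - (x*(s*e) + (x*e)*s) := by noncomm_ring

theorem syn_s_sq (d : R) (hd : d*d = d) : (1-(d+d))*(1-(d+d)) = 1 := by
  have h : (1-(d+d))*(1-(d+d)) = 1 - (d+d) - (d+d) + (d*d + d*d + (d*d + d*d)) := by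
    noncomm_ring
  rw [h, hd]; abel

theorem syn_conj_sub (x y E : R) (h1 : x*E = y*E) (h2 : E*x = E*y) (h3 : x*E*x = y*E*y) :
    (1-(x+x))*E*(1-(x+x)) = (1-(y+y))*E*(1-(y+y)) := by
  have hx : ∀ z : R, (1-(z+z))*E*(1-(z+z))
      = E - (z*E + z*E) - (E*z + E*z) + (z*E*z + z*E*z + (z*E*z + z*E*z)) := fun z => by
    noncomm_ring
  rw [hx, hx, h3, h1, h2]

theorem syn_conj_idem (hs : s*s = 1) (hp : e*e = e) : (s*e*s)*(s*e*s) = s*e*s := by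
  have h : (s*e*s)*(s*e*s) = s*(e*((s*s)*e))*s := by noncomm_ring
  rw [h, hs, one_mul, hp]

theorem syn_conj_conj (a : R) (hs : s*s = 1) : s*(s*a*s)*s = a := by
  have h : s*(s*a*s)*s = (s*s)*a*(s*s) := by noncomm_ring
  rw [h, hs, one_mul, mul_one]

variable {s e f}

theorem syn_mul_right_zero {u : R} (hs : s*s = 1) (hx : s*e*s = f)
    (h1 : e*u = 0) (h2 : f*u = 0) : (e + f - (s*e + e*s)) * u = 0 := by
  have h3 : e*(s*u) = 0 := by
    rw [← mul_assoc, syn_hes hs hx, mul_assoc, h2, mul_zero]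
  rw [syn_expandL, h1, h2, h3, mul_zero]; abel

theorem syn_mul_left_zero {u : R} (hs : s*s = 1) (hx : s*e*s = f)
    (h1 : u*e = 0) (h2 : u*f = 0) : u * (e + f - (s*e + e*s)) = 0 := by
  have h3 : u*(s*e) = 0 := by
    rw [syn_hse hs hx, ← mul_assoc, h2, zero_mul]
  rw [syn_expandR, h1, h2, h3, zero_mul]; abel

variable (hs : s*s = 1) (he : e*e = e) (hf : f*f = f)
    (hef : e*f = 0) (hfe : f*e = 0) (hx : s*e*s = f)
include hs he hf hef hfe hx

theorem syn_te : (e + f - (s*e + e*s)) * e = e - s*e := by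
  have hese : e*(s*e) = 0 := by
    rw [← mul_assoc, syn_hes hs hx, mul_assoc, hfe, mul_zero]
  rw [syn_expandL, he, hfe, hese, add_zero, add_zero]

theorem syn_tf : (e + f - (s*e + e*s)) * f = f - e*s := by
  have h1 : e*(s*f) = e*s := by rw [← syn_hes hs hx, ← mul_assoc, he]
  rw [syn_expandL, hef, hf, h1, mul_zero]; abel

theorem syn_ts : (e + f - (s*e + e*s)) * s = -(e + f - (s*e + e*s)) := by
  have h1 : s*(e*s) = f := by rw [syn_hes hs hx, ← mul_assoc, hs, one_mul]
  have h2 : e*(s*s) = e := by rw [hs, mul_one]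
  have h3 : f*s = s*e := (syn_hse hs hx).symm
  rw [syn_expandL, h1, h2, h3]; abel

theorem syn_t_sq :
    (e + f - (s*e + e*s)) * (e + f - (s*e + e*s))
      = (e + f - (s*e + e*s)) + (e + f - (s*e + e*s)) := by
  have hte := syn_te hs he hf hef hfe hx
  have h3 : (e + f - (s*e + e*s)) * (s*e) = s*e - e := by
    rw [← mul_assoc, syn_ts hs he hf hef hfe hx, neg_mul, hte, neg_sub]
  rw [syn_expandR, hte, syn_tf hs he hf hef hfe hx, h3, sub_mul, hx]
  abel

theorem syn_conj :
    (1 - (e + f - (s*e + e*s))) * e * (1 - (e + f - (s*e + e*s))) = f := by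
  have hte := syn_te hs he hf hef hfe hx
  have hese : e*(s*e) = 0 := by
    rw [← mul_assoc, syn_hes hs hx, mul_assoc, hfe, mul_zero]
  have het : e * (e + f - (s*e + e*s)) = e - e*s := by
    rw [syn_expandR, he, hef, hese]; abel
  have h5 : (1 - (e + f - (s*e + e*s))) * e = e - (e - s*e) := by
    rw [sub_mul, one_mul, hte]
  have h6 : (s*e) * (e + f - (s*e+e*s)) = s*e - f := by
    rw [mul_assoc, het, mul_sub, ← mul_assoc s e s, hx]
  rw [h5, sub_sub_cancel, mul_sub, mul_one, h6, sub_sub_cancel]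
end RingLemmas

namespace SynapticAlgebra
variable {R : Type*} [Ring R] [Algebra ℝ R] (S : SynapticAlgebra R)

theorem memA_neg {a : R} (ha : a ∈ S.A) : -a ∈ S.A := by
  have h := S.smul_mem (-1 : ℝ) ha; rwa [neg_one_smul] at h

theorem memA_sub {a b : R} (ha : a ∈ S.A) (hb : b ∈ S.A) : a - b ∈ S.A := by
  rw [sub_eq_add_neg]; exact S.add_mem ha (S.memA_neg hb)

theorem memA_jordan {a b : R} (ha : a ∈ S.A) (hb : b ∈ S.A) : a*b + b*a ∈ S.A := by
  have h : a*b + b*a = (a+b)*(a+b) - a*a - b*b := by noncomm_ring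
  rw [h]
  exact S.memA_sub (S.memA_sub (S.sq_mem _ (S.add_mem ha hb)) (S.sq_mem _ ha)) (S.sq_mem _ hb)

theorem memA_conj {a b : R} (ha : a ∈ S.A) (hb : b ∈ S.A) : a*b*a ∈ S.A := by
  have hc : a*(a*b+b*a) + (a*b+b*a)*a ∈ S.A := S.memA_jordan ha (S.memA_jordan ha hb)
  have hd : (a*a)*b + b*(a*a) ∈ S.A := S.memA_jordan (S.sq_mem a ha) hb
  have he : (a*(a*b+b*a) + (a*b+b*a)*a) - ((a*a)*b + b*(a*a)) = a*b*a + a*b*a := by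
    noncomm_ring
  have h2 : a*b*a = (1/2 : ℝ) • ((a*(a*b+b*a) + (a*b+b*a)*a) - ((a*a)*b + b*(a*a))) := by
    rw [he, ← two_smul ℝ, smul_smul]; norm_num
  rw [h2]; exact S.smul_mem _ (S.memA_sub hc hd)

theorem le_shift {a b : R} (ha : a ∈ S.A) (hb : b ∈ S.A) : S.le a b ↔ S.le 0 (b - a) := by
  constructor
  · intro h
    have h2 := S.add_le_add a ha b hb (-a) (S.memA_neg ha) h
    rwa [add_neg_cancel, ← sub_eq_add_neg] at h2
  · intro h
    have h2 := S.add_le_add 0 S.zero_mem (b-a) (S.memA_sub hb ha) a ha h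
    rwa [zero_add, sub_add_cancel] at h2

theorem proj_nonneg {p : R} (hp : p ∈ S.Proj) : S.le 0 p := by
  have h := S.sq_nonneg p hp.1; rwa [hp.2] at h

theorem proj_one_sub {p : R} (hp : p ∈ S.Proj) : (1:R) - p ∈ S.Proj :=
  ⟨S.memA_sub S.one_mem hp.1, by rw [sub_mul, one_mul, mul_sub, mul_one, hp.2]; abel⟩

theorem proj_le_iff {p q : R} (hp : p ∈ S.Proj) (hq : q ∈ S.Proj) :
    S.le p q ↔ p*q = p ∧ q*p = p := by
  constructor
  · intro h
    have hq' : (1:R)-q ∈ S.Proj := S.proj_one_sub hq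
    have hxA : (1-q)*p*(1-q) ∈ S.A := S.memA_conj hq'.1 hp.1
    have hx : S.le 0 ((1-q)*p*(1-q)) :=
      S.SA3 _ hq'.1 _ hp.1 (S.proj_nonneg hq') (S.proj_nonneg hp)
    have hy : S.le 0 ((1-q)*(q-p)*(1-q)) :=
      S.SA3 _ hq'.1 _ (S.memA_sub hq.1 hp.1) (S.proj_nonneg hq') ((S.le_shift hp.1 hq.1).1 h)
    have hsum : (1-q)*(q-p)*(1-q) = -((1-q)*p*(1-q)) := by
      have h1 : (1-q)*q = 0 := by rw [sub_mul, one_mul, hq.2, sub_self]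
      have h2 : (1-q)*(q-p) = -((1-q)*p) := by rw [mul_sub, h1, zero_sub]
      rw [h2, neg_mul]
    have hneg : S.le ((1-q)*p*(1-q)) 0 :=
      (S.le_shift hxA S.zero_mem).2 (by rw [zero_sub, ← hsum]; exact hy)
    have hzero : (1-q)*p*(1-q) = 0 := S.le_antisymm _ hxA _ S.zero_mem hneg hx
    obtain ⟨h4, h5⟩ := S.SA4 _ hq'.1 _ hp.1 (S.proj_nonneg hp) hzero
    constructor
    · have h6 := h5; rw [mul_sub, mul_one, sub_eq_zero] at h6; exact h6.symm
    · have h6 := h4; rw [sub_mul, one_mul, sub_eq_zero] at h6; exact h6.symm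
  · rintro ⟨h1, h2⟩
    have hexp : (1-p)*q*(1-p) = q - p*q - (q*p - p*(q*p)) := by noncomm_ring
    have hkey : (1-p)*q*(1-p) = q - p := by
      rw [hexp, h2, h1, hp.2]; abel
    rw [S.le_shift hp.1 hq.1, ← hkey]
    exact S.SA3 _ (S.proj_one_sub hp).1 _ hq.1
      (S.proj_nonneg (S.proj_one_sub hp)) (S.proj_nonneg hq)

theorem conj_nonneg {s a : R} (hs : S.IsSymmetry s) (ha : a ∈ S.A) (h : S.le 0 a) :
    S.le 0 (s*a*s) := by
  obtain ⟨b, ⟨hbA, _⟩, hb0, hbb⟩ := S.SA5 a ha h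
  have key : s*a*s = (s*b*s)*(s*b*s) := by
    have h2 : (s*b*s)*(s*b*s) = s*(b*((s*s)*b))*s := by noncomm_ring
    rw [h2, hs.2, one_mul, hbb]
  rw [key]; exact S.sq_nonneg _ (S.memA_conj hs.1 hbA)

theorem conj_mono {s a b : R} (hs : S.IsSymmetry s) (ha : a ∈ S.A) (hb : b ∈ S.A)
    (h : S.le a b) : S.le (s*a*s) (s*b*s) := by
  have h0 : S.le 0 (s*(b-a)*s) :=
    S.conj_nonneg hs (S.memA_sub hb ha) ((S.le_shift ha hb).1 h)
  have h1 : s*(b-a)*s = s*b*s - s*a*s := by noncomm_ring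
  rw [h1] at h0
  exact (S.le_shift (S.memA_conj hs.1 ha) (S.memA_conj hs.1 hb)).2 h0

end SynapticAlgebra

/-- Theorem 5.15: assume the projection lattice `P` is complete. If
`(eᵢ)` and `(fᵢ)` are pairwise orthogonal families in `P` with
`e = ⋁ᵢ eᵢ`, `f = ⋁ᵢ fᵢ`, `e ⊥ f`, and for each `i` the projections `eᵢ`
and `fᵢ` are exchanged by a symmetry `sᵢ`, then there is a symmetry `s`
exchanging `e` and `f`. -/
theorem stmt12 {R : Type*} [Ring R] [Algebra ℝ R] (S : SynapticAlgebra R)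
    (hcomp : S.ProjComplete) {ι : Type*} (es fs : ι → R) (e f : R)
    (hes : ∀ i, es i ∈ S.Proj) (hfs : ∀ i, fs i ∈ S.Proj)
    (heo : ∀ i j, i ≠ j → es i * es j = 0)
    (hfo : ∀ i j, i ≠ j → fs i * fs j = 0)
    (he : S.IsSupOf (Set.range es) e) (hf : S.IsSupOf (Set.range fs) f)
    (hef : e * f = 0) (hfe : f * e = 0)
    (hex : ∀ i, ∃ s, S.IsSymmetry s ∧ s * es i * s = fs i) :
    ∃ s, S.IsSymmetry s ∧ s * e * s = f := by
  classical
  choose σ hσ hσx using hex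
  obtain ⟨heP, heub, hemin⟩ := he
  obtain ⟨hfP, hfub, hfmin⟩ := hf
  have heE : ∀ i, es i * e = es i ∧ e * es i = es i := fun i =>
    (S.proj_le_iff (hes i) heP).1 (heub _ ⟨i, rfl⟩)
  have hfF : ∀ i, fs i * f = fs i ∧ f * fs i = fs i := fun i =>
    (S.proj_le_iff (hfs i) hfP).1 (hfub _ ⟨i, rfl⟩)
  have hEF : ∀ i j, es i * fs j = 0 := by
    intro i j
    calc es i * fs j = (es i * e) * (f * fs j) := by rw [(heE i).1, (hfF j).2]
    _ = es i * (e*f) * fs j := by noncomm_ring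
    _ = 0 := by rw [hef, mul_zero, zero_mul]
  have hFE : ∀ i j, fs i * es j = 0 := by
    intro i j
    calc fs i * es j = (fs i * f) * (e * es j) := by rw [(hfF i).1, (heE j).2]
    _ = fs i * (f*e) * es j := by noncomm_ring
    _ = 0 := by rw [hfe, mul_zero, zero_mul]
  set T : ι → R := fun i => es i + fs i - (σ i * es i + es i * σ i) with hTdef
  have hTsq : ∀ i, T i * T i = T i + T i := fun i =>
    syn_t_sq (hσ i).2 (hes i).2 (hfs i).2 (hEF i i) (hFE i i) (hσx i)
  have hTA : ∀ i, T i ∈ S.A := fun i =>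
    S.memA_sub (S.add_mem (hes i).1 (hfs i).1) (S.memA_jordan (hσ i).1 (hes i).1)
  set D : ι → R := fun i => (1/2 : ℝ) • T i with hDdef
  have hDsq : ∀ i, D i * D i = D i := fun i => by
    show ((1/2:ℝ) • T i) * ((1/2:ℝ) • T i) = (1/2:ℝ) • T i
    rw [smul_mul_assoc, mul_smul_comm, hTsq i, ← two_smul ℝ, smul_smul, smul_smul]
    norm_num
  have hDP : ∀ i, D i ∈ S.Proj := fun i => ⟨S.smul_mem _ (hTA i), hDsq i⟩
  have hDT : ∀ i, D i + D i = T i := fun i => by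
    show (1/2:ℝ) • T i + (1/2:ℝ) • T i = T i
    rw [← add_smul]; norm_num
  have hTe : ∀ i j, j ≠ i → T j * es i = 0 := fun i j hji =>
    syn_mul_right_zero (hσ j).2 (hσx j) (heo j i hji) (hFE j i)
  have heT : ∀ i j, j ≠ i → es i * T j = 0 := fun i j hji =>
    syn_mul_left_zero (hσ j).2 (hσx j) (heo i j (Ne.symm hji)) (hEF i j)
  have hfT : ∀ i j, j ≠ i → fs i * T j = 0 := fun i j hji =>
    syn_mul_left_zero (hσ j).2 (hσx j) (hFE i j) (hfo i j (Ne.symm hji))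
  have hTT : ∀ i j, j ≠ i → T i * T j = 0 := fun i j hji =>
    syn_mul_right_zero (hσ i).2 (hσx i) (heT i j hji) (hfT i j hji)
  have hrangeD : Set.range D ⊆ S.Proj := by rintro x ⟨i, rfl⟩; exact hDP i
  obtain ⟨d, hdP, hdub, hdmin⟩ := (hcomp _ hrangeD).1
  have hsA : (1:R) - (d + d) ∈ S.A := S.memA_sub S.one_mem (S.add_mem hdP.1 hdP.1)
  have hss : ((1:R) - (d + d)) * ((1:R) - (d + d)) = 1 := syn_s_sq d hdP.2
  have hsym : S.IsSymmetry ((1:R) - (d + d)) := ⟨hsA, hss⟩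
  set s : R := (1:R) - (d + d) with hsdef
  have key : ∀ i, s * es i * s = fs i := by
    intro i
    have hQ' : (D '' {j | j ≠ i}) ⊆ S.Proj := by rintro x ⟨j, hj, rfl⟩; exact hDP j
    obtain ⟨d', hd'P, hd'ub, hd'min⟩ := (hcomp _ hQ').1
    have hDjei : ∀ j, j ≠ i → D j * es i = 0 ∧ es i * D j = 0 := by
      intro j hj
      constructor
      · show ((1/2:ℝ) • T j) * es i = 0
        rw [smul_mul_assoc, hTe i j hj, smul_zero]
      · show es i * ((1/2:ℝ) • T j) = 0
        rw [mul_smul_comm, heT i j hj, smul_zero]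
    have hDjDi : ∀ j, j ≠ i → D j * D i = 0 ∧ D i * D j = 0 := by
      intro j hj
      constructor
      · show ((1/2:ℝ) • T j) * ((1/2:ℝ) • T i) = 0
        rw [smul_mul_assoc, mul_smul_comm, hTT j i (Ne.symm hj), smul_zero, smul_zero]
      · show ((1/2:ℝ) • T i) * ((1/2:ℝ) • T j) = 0
        rw [smul_mul_assoc, mul_smul_comm, hTT i j hj, smul_zero, smul_zero]
    have h1ei : (1:R) - es i ∈ S.Proj := S.proj_one_sub (hes i)
    have hd'ei : d' * es i = 0 ∧ es i * d' = 0 := by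
      have hub : S.le d' (1 - es i) := by
        apply hd'min _ h1ei
        rintro x ⟨j, hj, rfl⟩
        exact (S.proj_le_iff (hDP j) h1ei).2
          ⟨by rw [mul_sub, mul_one, (hDjei j hj).1, sub_zero],
           by rw [sub_mul, one_mul, (hDjei j hj).2, sub_zero]⟩
      obtain ⟨ha, hb⟩ := (S.proj_le_iff hd'P h1ei).1 hub
      constructor
      · rw [mul_sub, mul_one, sub_eq_self] at ha; exact ha
      · rw [sub_mul, one_mul, sub_eq_self] at hb; exact hb
    have h1Di : (1:R) - D i ∈ S.Proj := S.proj_one_sub (hDP i)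
    have hd'Di : d' * D i = 0 ∧ D i * d' = 0 := by
      have hub : S.le d' (1 - D i) := by
        apply hd'min _ h1Di
        rintro x ⟨j, hj, rfl⟩
        exact (S.proj_le_iff (hDP j) h1Di).2
          ⟨by rw [mul_sub, mul_one, (hDjDi j hj).1, sub_zero],
           by rw [sub_mul, one_mul, (hDjDi j hj).2, sub_zero]⟩
      obtain ⟨ha, hb⟩ := (S.proj_le_iff hd'P h1Di).1 hub
      constructor
      · rw [mul_sub, mul_one, sub_eq_self] at ha; exact ha
      · rw [sub_mul, one_mul, sub_eq_self] at hb; exact hb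
    have hsumP : D i + d' ∈ S.Proj := by
      refine ⟨S.add_mem (hDP i).1 hd'P.1, ?_⟩
      rw [add_mul, mul_add, mul_add, hDsq i, hd'P.2, hd'Di.1, hd'Di.2, add_zero, zero_add]
    have hDile : S.le (D i) (D i + d') :=
      (S.proj_le_iff (hDP i) hsumP).2
        ⟨by rw [mul_add, hDsq i, hd'Di.2, add_zero],
         by rw [add_mul, hDsq i, hd'Di.1, add_zero]⟩
    have hd'le : S.le d' (D i + d') :=
      (S.proj_le_iff hd'P hsumP).2
        ⟨by rw [mul_add, hd'Di.1, hd'P.2, zero_add],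
         by rw [add_mul, hd'Di.2, hd'P.2, zero_add]⟩
    have hdle : S.le d (D i + d') := by
      apply hdmin _ hsumP
      rintro x ⟨j, rfl⟩
      by_cases hj : j = i
      · subst hj; exact hDile
      · exact S.le_trans _ (hDP j).1 _ hd'P.1 _ hsumP.1 (hd'ub _ ⟨j, hj, rfl⟩) hd'le
    have hled : S.le (D i + d') d := by
      have h1 : S.le (D i) d := hdub _ ⟨i, rfl⟩
      have h2 : S.le d' d := hd'min _ hdP (by rintro x ⟨j, hj, rfl⟩; exact hdub _ ⟨j, rfl⟩)
      obtain ⟨h1a, h1b⟩ := (S.proj_le_iff (hDP i) hdP).1 h1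
      obtain ⟨h2a, h2b⟩ := (S.proj_le_iff hd'P hdP).1 h2
      exact (S.proj_le_iff hsumP hdP).2
        ⟨by rw [add_mul, h1a, h2a], by rw [mul_add, h1b, h2b]⟩
    have hdeq : d = D i + d' := S.le_antisymm _ hdP.1 _ hsumP.1 hdle hled
    have hde : d * es i = D i * es i := by rw [hdeq, add_mul, hd'ei.1, add_zero]
    have hed : es i * d = es i * D i := by rw [hdeq, mul_add, hd'ei.2, add_zero]
    have hded : d * es i * d = D i * es i * D i := by
      rw [hde, hdeq, mul_add, mul_assoc (D i) (es i) d', hd'ei.2, mul_zero, add_zero]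
    calc s * es i * s = (1 - (D i + D i)) * es i * (1 - (D i + D i)) := by
          rw [hsdef]; exact syn_conj_sub d (D i) (es i) hde hed hded
    _ = (1 - T i) * es i * (1 - T i) := by rw [hDT i]
    _ = fs i := by
          simp only [hTdef]
          exact syn_conj (hσ i).2 (hes i).2 (hfs i).2 (hEF i i) (hFE i i) (hσx i)
  have hsesP : s*e*s ∈ S.Proj := ⟨S.memA_conj hsA heP.1, syn_conj_idem s e hss heP.2⟩
  have hsfsP : s*f*s ∈ S.Proj := ⟨S.memA_conj hsA hfP.1, syn_conj_idem s f hss hfP.2⟩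
  have h1 : S.le f (s*e*s) := by
    apply hfmin _ hsesP
    rintro x ⟨i, rfl⟩
    rw [← key i]
    exact S.conj_mono hsym (hes i).1 heP.1 (heub _ ⟨i, rfl⟩)
  have h2 : S.le (s*e*s) f := by
    have h3 : S.le e (s*f*s) := by
      apply hemin _ hsfsP
      rintro x ⟨i, rfl⟩
      have h4 : es i = s * fs i * s := by rw [← key i, syn_conj_conj s (es i) hss]
      rw [h4]
      exact S.conj_mono hsym (hfs i).1 hfP.1 (hfub _ ⟨i, rfl⟩)
    have h4 := S.conj_mono hsym heP.1 (S.memA_conj hsA hfP.1) h3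
    rwa [syn_conj_conj s f hss] at h4
  exact ⟨s, hsym, S.le_antisymm _ (S.memA_conj hsA heP.1) _ hfP.1 h2 h1⟩
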